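/- Fix integers n ≥ 1 and j ≥ 1, a real number α ≠ 0, and a real number θ. Then the sum over all j-balanced set partitions π of {1,…,n} × {1,…,j} of the weight (θ/α)^{↑#π} · ∏_{b ∈ π} [ −(−α/j)^{↑(#b/j)} ] · ((#b/j)!)^{j−1} equals (θ/j)^{↑n} · (n!)^{j−1}. (This is the statement that the Chinese-restaurant construction for balanced partitions yields the probability distribution p_n^j(π;α,θ) = (θ/α)^{↑#π} ∏_{b∈π} [−(−α/j)^{↑(#b/j)}] ((#b/j)!)^{j−1} / [(θ/j)^{↑n}(n!)^{j−1}] on j-balanced partitions.) -/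

import Mathlib

/-!
The type-`0` slices `{i | (i, 0) ∈ b}` of the blocks `b` of a balanced partition `π` form a
partition `ρ` of `{1,…,n}`; by balance, slicing is injective on blocks and the slice of `b` has
`#b / j` elements, so `π` and `ρ` have the same number of blocks and the same block weights.
Conversely `π` is recovered from `ρ` together with, for every other type `t`, the map sending `i`
to the slice of the block containing `(i, t)`. These maps are exactly the rearrangements
`ρ.part ∘ σ`, of which there are `n! / ∏_{c ∈ ρ} #c!`. Hence the balanced partitions over `ρ`
contribute `(n!)^{j-1}` times the Ewens–Pitman weight `u^{↑#ρ} ∏_{c ∈ ρ} -(-y)^{↑#c}` of `ρ`, with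
`u = θ/α` and `y = α/j`, and these weights sum to `(u y)^{↑n}` by the Chinese restaurant
recursion.
-/

/-- The rising factorial `x^{↑n} = x(x+1)⋯(x+n−1)`. -/
def risingFactorial (x : ℝ) (n : ℕ) : ℝ := ∏ i ∈ Finset.range n, (x + i)

/-- A set partition of `{1,…,n} × {1,…,j}` is `j`-balanced if every block contains an
equal number of elements of each of the `j` types (the type of an element being its
second coordinate). -/
def IsBalanced {n j : ℕ} (π : Finpartition (Finset.univ : Finset (Fin n × Fin j))) : Prop :=
  ∀ b ∈ π.parts, ∀ t t' : Fin j,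
    (b.filter fun p => p.2 = t).card = (b.filter fun p => p.2 = t').card

instance {n j : ℕ} (π : Finpartition (Finset.univ : Finset (Fin n × Fin j))) :
    Decidable (IsBalanced π) := by unfold IsBalanced; infer_instance

open Finset
open scoped Nat

theorem risingFactorial_succ (x : ℝ) (n : ℕ) :
    risingFactorial x (n + 1) = risingFactorial x n * (x + n) :=
  prod_range_succ _ _

theorem risingFactorial_one (x : ℝ) : risingFactorial x 1 = x := by
  simp [risingFactorial]

section Rearrangements

variable {α ι : Type*} [Fintype α] [DecidableEq α] [Fintype ι] [DecidableEq ι]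

def rearrangements (f : α → ι) : Finset (α → ι) :=
  {g | ∀ c, #{a | g a = c} = #{a | f a = c}}

theorem comp_perm_mem_rearrangements (f : α → ι) (σ : Equiv.Perm α) :
    f ∘ σ ∈ rearrangements f :=
  mem_filter.2 ⟨mem_univ _, fun c => card_equiv σ fun a => by simp⟩

theorem exists_perm_comp_eq {f g : α → ι} (hg : g ∈ rearrangements f) :
    ∃ σ : Equiv.Perm α, f ∘ σ = g := by
  have hcard (c : ι) : Fintype.card {a // g a = c} = Fintype.card {a // f a = c} := by
    simp only [Fintype.card_subtype]
    exact (mem_filter.1 hg).2 c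
  exact ⟨Equiv.ofFiberEquiv fun c => Fintype.equivOfCardEq (hcard c),
    funext (Equiv.ofFiberEquiv_map _)⟩

theorem card_rearrangements_mul_prod_factorial (f : α → ι) :
    #(rearrangements f) * ∏ c, (#{a | f a = c})! = (Fintype.card α)! := by
  -- Orbit–stabilizer: `σ ↦ f ∘ σ` maps onto the rearrangements, each fibre a coset of the
  -- stabilizer of `f`.
  have hstab : #{σ : Equiv.Perm α | f ∘ σ = f} = ∏ c, (#{a | f a = c})! := by
    simpa only [Fintype.card_subtype] using DomMulAct.stabilizer_card f
  have hfiber : ∀ g ∈ rearrangements f,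
      #{σ : Equiv.Perm α | f ∘ σ = g} = ∏ c, (#{a | f a = c})! := by
    intro g hg
    obtain ⟨σ₀, rfl⟩ := exists_perm_comp_eq hg
    rw [← hstab]
    refine (card_equiv (Equiv.mulRight σ₀) fun τ => ?_).symm
    simp only [mem_filter, mem_univ, true_and, Equiv.coe_mulRight, Equiv.Perm.coe_mul]
    refine ⟨fun h => by rw [← Function.comp_assoc, h], fun h => funext fun a => ?_⟩
    simpa using congrFun h (σ₀⁻¹ a)
  rw [← Fintype.card_perm, ← card_univ, card_eq_sum_card_fiberwise
    (fun σ _ => comp_perm_mem_rearrangements f σ), sum_congr rfl hfiber, sum_const, smul_eq_mul]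

end Rearrangements

namespace Finpartition

variable {X : Type*} [DecidableEq X] {s : Finset X}

theorem parts_eq_image_part (P : Finpartition s) : P.parts = s.image P.part := by
  ext b
  rw [mem_image]
  constructor
  · intro hb
    obtain ⟨x, hx⟩ := P.nonempty_of_mem_parts hb
    exact ⟨x, P.le hb hx, P.part_eq_of_mem hb hx⟩
  · rintro ⟨x, hx, rfl⟩
    exact P.part_mem.2 hx

theorem ext_of_part_eq {P Q : Finpartition s} (h : ∀ x ∈ s, P.part x = Q.part x) : P = Q := by
  ext1
  rw [parts_eq_image_part P, parts_eq_image_part Q]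
  exact image_congr h

theorem filter_part_eq_of_mem (P : Finpartition s) {b : Finset X} (hb : b ∈ P.parts) :
    {x ∈ s | P.part x = b} = b := by
  ext x
  rw [mem_filter]
  exact ⟨fun h => (P.part_eq_iff_mem hb).1 h.2, fun hx => ⟨P.le hb hx, P.part_eq_of_mem hb hx⟩⟩

theorem part_restrict {t : Finset X} (P : Finpartition t) (hst : s ⊆ t) {x : X} (hx : x ∈ s) :
    (P.restrict hst).part x = P.part x ∩ s := by
  have hmem : x ∈ P.part x ∩ s := mem_inter.2 ⟨P.mem_part (hst hx), hx⟩
  refine part_eq_of_mem _ ?_ hmem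
  simp only [restrict, inf_eq_inter, bot_eq_empty, mem_erase, mem_image]
  exact ⟨ne_empty_of_mem hmem, P.part x, P.part_mem.2 (hst hx), rfl⟩

variable {a : X}

/-- Adds the new point `a` to the part `b` of `P`, or as a new singleton part when `b = ∅`. -/
def insertInto (P : Finpartition s) (ha : a ∉ s) (b : Finset X) (hb : b ∈ insert ∅ P.parts) :
    Finpartition (insert a s) where
  parts := insert (insert a b) (P.parts.erase b)
  supIndep := by
    rw [supIndep_iff_pairwiseDisjoint, coe_insert]
    refine (P.disjoint.subset (coe_subset.2 (erase_subset b P.parts))).insert fun c hc _ => ?_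
    obtain ⟨hcb, hc⟩ := mem_erase.1 hc
    refine disjoint_insert_left.2 ⟨fun hac => ha (P.le hc hac), ?_⟩
    rcases mem_insert.1 hb with rfl | hb
    · exact disjoint_empty_left c
    · exact P.disjoint hb hc (Ne.symm hcb)
  sup_parts := by
    have hsup : b ∪ (P.parts.erase b).sup id = s := by
      rcases mem_insert.1 hb with rfl | hb
      · rw [erase_eq_of_notMem P.empty_notMem_parts, empty_union, P.sup_parts]
      · conv_rhs => rw [← P.sup_parts, ← insert_erase hb, sup_insert]
        rfl
    rw [sup_insert, id_eq, sup_eq_union, insert_union, hsup]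
  bot_notMem h := by
    rcases mem_insert.1 h with h | h
    · exact insert_ne_empty a b h.symm
    · exact P.bot_notMem (mem_of_mem_erase h)

theorem subset_of_mem_insert_empty_parts {P : Finpartition s} {b : Finset X}
    (hb : b ∈ insert ∅ P.parts) : b ⊆ s := by
  rcases mem_insert.1 hb with rfl | hb
  · exact empty_subset s
  · exact P.le hb

section insertInto

variable (P : Finpartition s) (ha : a ∉ s) {b : Finset X} (hb : b ∈ insert ∅ P.parts)

theorem part_insertInto_self : (P.insertInto ha b hb).part a = insert a b :=
  part_eq_of_mem _ (mem_insert_self _ _) (mem_insert_self a b)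

theorem part_insertInto_of_mem {x : X} (hx : x ∈ b) : (P.insertInto ha b hb).part x = insert a b :=
  part_eq_of_mem _ (mem_insert_self _ _) (mem_insert_of_mem hx)

theorem part_insertInto_of_notMem {x : X} (hxs : x ∈ s) (hxb : x ∉ b) :
    (P.insertInto ha b hb).part x = P.part x := by
  refine part_eq_of_mem _ (mem_insert_of_mem (mem_erase.2 ⟨?_, P.part_mem.2 hxs⟩)) (P.mem_part hxs)
  rintro rfl
  exact hxb (P.mem_part hxs)

theorem restrict_insertInto : (P.insertInto ha b hb).restrict (subset_insert a s) = P := by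
  refine ext_of_part_eq fun x hx => ?_
  rw [part_restrict _ _ hx]
  by_cases hxb : x ∈ b
  · have hb' : b ∈ P.parts := (mem_insert.1 hb).resolve_left (ne_empty_of_mem hxb)
    rw [part_insertInto_of_mem P ha hb hxb, P.part_eq_of_mem hb' hxb, insert_inter_of_notMem ha,
      inter_eq_left.2 (P.le hb')]
  · rw [part_insertInto_of_notMem P ha hb hx hxb, inter_eq_left.2 (P.part_subset x)]

end insertInto

theorem inter_part_mem_insert_empty_parts_restrict (Q : Finpartition (insert a s)) :
    Q.part a ∩ s ∈ insert ∅ (Q.restrict (subset_insert a s)).parts := by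
  rcases (Q.part a ∩ s).eq_empty_or_nonempty with h | ⟨x, hx⟩
  · rw [h]
    exact mem_insert_self _ _
  · obtain ⟨hxa, hxs⟩ := mem_inter.1 hx
    rw [← Q.part_eq_of_mem (Q.part_mem.2 (mem_insert_self a s)) hxa,
      ← part_restrict Q (subset_insert a s) hxs]
    exact mem_insert_of_mem ((Q.restrict (subset_insert a s)).part_mem.2 hxs)

theorem insertInto_restrict (ha : a ∉ s) (Q : Finpartition (insert a s)) :
    (Q.restrict (subset_insert a s)).insertInto ha (Q.part a ∩ s)
      (inter_part_mem_insert_empty_parts_restrict Q) = Q := by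
  have hQa : Q.part a ∈ Q.parts := Q.part_mem.2 (mem_insert_self a s)
  have hinsert : insert a (Q.part a ∩ s) = Q.part a := by
    rw [insert_inter_distrib, insert_eq_of_mem (Q.mem_part (mem_insert_self a s)),
      inter_eq_left.2 (Q.part_subset a)]
  refine ext_of_part_eq fun x hx => ?_
  rcases mem_insert.1 hx with rfl | hxs
  · rw [part_insertInto_self, hinsert]
  by_cases hxa : x ∈ Q.part a ∩ s
  · rw [part_insertInto_of_mem _ _ _ hxa, hinsert, Q.part_eq_of_mem hQa (mem_inter.1 hxa).1]
  · have haQx : a ∉ Q.part x := fun h =>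
      hxa (mem_inter.2 ⟨Q.part_eq_of_mem (Q.part_mem.2 hx) h ▸ Q.mem_part hx, hxs⟩)
    rw [part_insertInto_of_notMem _ _ _ hxs hxa, part_restrict _ _ hxs, inter_eq_left]
    exact fun y hy =>
      (mem_insert.1 (Q.part_subset x hy)).resolve_left fun hya => haQx (hya ▸ hy)

def ewensWeight (u y : ℝ) (P : Finpartition s) : ℝ :=
  risingFactorial u #P.parts * ∏ b ∈ P.parts, -risingFactorial (-y) #b

theorem ewensWeight_insertInto (u y : ℝ) (P : Finpartition s) (ha : a ∉ s) {b : Finset X}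
    (hb : b ∈ insert ∅ P.parts) :
    (P.insertInto ha b hb).ewensWeight u y =
      P.ewensWeight u y * if b = ∅ then (u + #P.parts) * y else #b - y := by
  have hab : a ∉ b := fun h => ha (subset_of_mem_insert_empty_parts hb h)
  have hnew : insert a b ∉ P.parts.erase b := fun h =>
    ha (P.le (mem_of_mem_erase h) (mem_insert_self a b))
  simp only [ewensWeight, insertInto, card_insert_of_notMem hnew, prod_insert hnew,
    card_insert_of_notMem hab]
  rcases mem_insert.1 hb with rfl | hb
  · rw [if_pos rfl, erase_eq_of_notMem P.empty_notMem_parts, card_empty, zero_add,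
      risingFactorial_succ, risingFactorial_one]
    ring
  · rw [if_neg (P.ne_empty hb), card_erase_add_one hb, risingFactorial_succ,
      ← mul_prod_erase P.parts _ hb]
    ring

theorem sum_ewensWeight_restrict_eq (u y : ℝ) (ha : a ∉ s) (P : Finpartition s) :
    ∑ Q : Finpartition (insert a s) with Q.restrict (subset_insert a s) = P, Q.ewensWeight u y =
      P.ewensWeight u y * (u * y + #s) := by
  -- The new customer `a` opens a new table (weight `(u + #P.parts) * y`) or joins the table `b`
  -- (weight `#b - y`); the total is `u * y + #s`.
  calc ∑ Q : Finpartition (insert a s) with Q.restrict (subset_insert a s) = P, Q.ewensWeight u y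
      = ∑ b ∈ insert ∅ P.parts,
          P.ewensWeight u y * if b = ∅ then (u + #P.parts) * y else #b - y := by
        refine sum_bij' (fun Q _ => Q.part a ∩ s) (fun b hb => P.insertInto ha b hb) ?_
          (fun b hb => mem_filter.2 ⟨mem_univ _, restrict_insertInto P ha hb⟩) ?_ ?_ ?_
        · intro Q hQ
          rw [← (mem_filter.1 hQ).2]
          exact inter_part_mem_insert_empty_parts_restrict Q
        · intro Q hQ
          obtain rfl := (mem_filter.1 hQ).2
          exact insertInto_restrict ha Q
        · intro b hb
          rw [part_insertInto_self, insert_inter_of_notMem ha,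
            inter_eq_left.2 (subset_of_mem_insert_empty_parts hb)]
        · intro Q hQ
          obtain rfl := (mem_filter.1 hQ).2
          conv_lhs => rw [← insertInto_restrict ha Q]
          exact ewensWeight_insertInto u y _ ha _
    _ = P.ewensWeight u y * ((u + #P.parts) * y + ∑ b ∈ P.parts, ((#b : ℝ) - y)) := by
        rw [sum_insert P.empty_notMem_parts, if_pos rfl, ← mul_sum, mul_add]
        congr 2
        exact sum_congr rfl fun b hb => if_neg (P.ne_empty hb)
    _ = P.ewensWeight u y * (u * y + #s) := by
        rw [sum_sub_distrib, sum_const, nsmul_eq_mul, ← Nat.cast_sum, P.sum_card_parts]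
        ring

theorem sum_ewensWeight (u y : ℝ) (s : Finset X) :
    ∑ P : Finpartition s, P.ewensWeight u y = risingFactorial (u * y) #s := by
  induction s using Finset.induction_on with
  | empty =>
    have : Unique (Finpartition (∅ : Finset X)) :=
      inferInstanceAs (Unique (Finpartition (⊥ : Finset X)))
    simp [ewensWeight, parts_eq_empty_iff.2 rfl, risingFactorial]
  | insert a s ha ih =>
    rw [← sum_fiberwise_of_maps_to (g := fun Q => Q.restrict (subset_insert a s))
      (fun _ _ => mem_univ _)]
    simp_rw [sum_ewensWeight_restrict_eq u y ha]
    rw [← sum_mul, ih, card_insert_of_notMem ha, risingFactorial_succ]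

section Fintype

variable {α β : Type*} [Fintype α] [DecidableEq α] [DecidableEq β]

def ker (F : α → β) : Finpartition (univ : Finset α) :=
  ofSetoid (Setoid.ker F)

theorem part_ker (F : α → β) (x : α) : (ker F).part x = ({y | F y = F x} : Finset α) := by
  ext y
  rw [ker, mem_part_ofSetoid_iff_rel, Setoid.ker_def, mem_filter]
  simp [eq_comm]

theorem ker_comp_part (P : Finpartition (univ : Finset α)) {g : Finset α → β}
    (hg : Set.InjOn g P.parts) : ker (g ∘ P.part) = P := by
  refine ext_of_part_eq fun x _ => ?_
  ext y
  rw [part_ker, mem_filter, Function.comp_apply, Function.comp_apply,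
    hg.eq_iff (P.part_mem.2 (mem_univ y)) (P.part_mem.2 (mem_univ x)),
    P.mem_part_iff_part_eq_part (mem_univ y) (mem_univ x)]
  simp

theorem mem_parts_of_mem_rearrangements_part {P : Finpartition (univ : Finset α)}
    {g : α → Finset α} (hg : g ∈ rearrangements P.part) (x : α) : g x ∈ P.parts := by
  have hpos : 0 < #{y | P.part y = g x} := by
    rw [← (mem_filter.1 hg).2 (g x)]
    exact card_pos.2 ⟨x, by simp⟩
  obtain ⟨y, hy⟩ := card_pos.1 hpos
  rw [← (mem_filter.1 hy).2]
  exact P.part_mem.2 (mem_univ y)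

theorem prod_factorial_card_fiber_part (P : Finpartition (univ : Finset α)) :
    ∏ c, (#{x | P.part x = c})! = ∏ c ∈ P.parts, (#c)! := by
  rw [← prod_subset (subset_univ P.parts) fun c _ hc => ?_]
  · exact prod_congr rfl fun c hc => by rw [P.filter_part_eq_of_mem hc]
  · rw [filter_false_of_mem fun x _ (h : P.part x = c) => hc (h ▸ P.part_mem.2 (mem_univ x)),
      card_empty, Nat.factorial_zero]

end Fintype

end Finpartition

section TypeSlices

variable {ι τ : Type*} [Fintype ι] [DecidableEq ι] [DecidableEq τ]

def typeSlice (t : τ) (b : Finset (ι × τ)) : Finset ι := {i | (i, t) ∈ b}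

@[simp]
theorem mem_typeSlice {t : τ} {b : Finset (ι × τ)} {i : ι} : i ∈ typeSlice t b ↔ (i, t) ∈ b := by
  simp [typeSlice]

theorem card_typeSlice (t : τ) (b : Finset (ι × τ)) : #(typeSlice t b) = #{p ∈ b | p.2 = t} := by
  refine card_nbij' (·, t) Prod.fst (fun i hi => ?_) (fun p hp => ?_) (fun i _ => rfl)
    (fun p hp => ?_)
  · simpa using hi
  · obtain ⟨hpb, rfl⟩ := mem_filter.1 hp
    simpa using hpb
  · obtain ⟨-, rfl⟩ := mem_filter.1 hp
    rfl

variable [Fintype τ]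

def typeTrace (t : τ) (π : Finpartition (univ : Finset (ι × τ))) :
    Finpartition (univ : Finset ι) :=
  Finpartition.ker fun i => π.part (i, t)

theorem part_typeTrace (t : τ) (π : Finpartition (univ : Finset (ι × τ))) (i : ι) :
    (typeTrace t π).part i = typeSlice t (π.part (i, t)) := by
  ext x
  rw [typeTrace, Finpartition.part_ker, mem_filter, mem_typeSlice,
    π.mem_part_iff_part_eq_part (mem_univ _) (mem_univ _)]
  simp

def sliceLabels (z : τ) (π : Finpartition (univ : Finset (ι × τ))) (t : τ) (i : ι) : Finset ι :=
  typeSlice z (π.part (i, t))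

def ofLabels (f : τ → ι → Finset ι) : Finpartition (univ : Finset (ι × τ)) :=
  Finpartition.ker fun p => f p.2 p.1

theorem typeSlice_part_ofLabels (f : τ → ι → Finset ι) (t : τ) (p : ι × τ) :
    typeSlice t ((ofLabels f).part p) = ({i | f t i = f p.2 p.1} : Finset ι) := by
  ext i
  simp [ofLabels, Finpartition.part_ker]

def admissibleLabels (z : τ) (ρ : Finpartition (univ : Finset ι)) :
    Finset (τ → ι → Finset ι) :=
  Fintype.piFinset fun t => if t = z then {ρ.part} else rearrangements ρ.part

variable {z : τ} {ρ : Finpartition (univ : Finset ι)} {f : τ → ι → Finset ι}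

theorem mem_admissibleLabels :
    f ∈ admissibleLabels z ρ ↔ f z = ρ.part ∧ ∀ t, f t ∈ rearrangements ρ.part := by
  simp only [admissibleLabels, Fintype.mem_piFinset]
  constructor
  · intro h
    have hz : f z = ρ.part := by simpa using h z
    refine ⟨hz, fun t => ?_⟩
    by_cases ht : t = z
    · rw [ht, hz]
      exact mem_filter.2 ⟨mem_univ _, fun _ => rfl⟩
    · simpa [ht] using h t
  · rintro ⟨hz, hf⟩ t
    split_ifs with ht
    · exact mem_singleton.2 (ht ▸ hz)
    · exact hf t

theorem card_admissibleLabels (z : τ) (ρ : Finpartition (univ : Finset ι)) :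
    #(admissibleLabels z ρ) = #(rearrangements ρ.part) ^ (Fintype.card τ - 1) := by
  rw [admissibleLabels, Fintype.card_piFinset, Fintype.prod_eq_mul_prod_compl z, if_pos rfl,
    card_singleton, one_mul, prod_congr rfl fun t ht => by rw [if_neg (by simpa using ht)],
    prod_const, card_compl, card_singleton]

theorem typeTrace_ofLabels (hz : f z = ρ.part) : typeTrace z (ofLabels f) = ρ := by
  refine Finpartition.ext_of_part_eq fun i _ => ?_
  rw [part_typeTrace, typeSlice_part_ofLabels, hz]
  exact ρ.filter_part_eq_of_mem (ρ.part_mem.2 (mem_univ i))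

theorem sliceLabels_ofLabels (hz : f z = ρ.part) (hf : ∀ t, f t ∈ rearrangements ρ.part) :
    sliceLabels z (ofLabels f) = f := by
  funext t i
  rw [sliceLabels, typeSlice_part_ofLabels, hz]
  exact ρ.filter_part_eq_of_mem (Finpartition.mem_parts_of_mem_rearrangements_part (hf t) i)

end TypeSlices

section Balanced

variable {n j : ℕ} {π : Finpartition (univ : Finset (Fin n × Fin j))} {b : Finset (Fin n × Fin j)}

theorem isBalanced_iff_card_typeSlice :
    IsBalanced π ↔ ∀ b ∈ π.parts, ∀ t t', #(typeSlice t b) = #(typeSlice t' b) := by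
  simp only [IsBalanced, card_typeSlice]

theorem isBalanced_ofLabels {f : Fin j → Fin n → Finset (Fin n)} {g : Fin n → Finset (Fin n)}
    (hf : ∀ t, f t ∈ rearrangements g) : IsBalanced (ofLabels f) := by
  rw [isBalanced_iff_card_typeSlice]
  intro b hb t t'
  rw [Finpartition.parts_eq_image_part, mem_image] at hb
  obtain ⟨p, -, rfl⟩ := hb
  rw [typeSlice_part_ofLabels, typeSlice_part_ofLabels, (mem_filter.1 (hf t)).2,
    (mem_filter.1 (hf t')).2]

namespace IsBalanced

theorem card_eq_mul (hπ : IsBalanced π) (hb : b ∈ π.parts) (t : Fin j) :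
    #b = j * #(typeSlice t b) :=
  calc #b = ∑ t' : Fin j, #{p ∈ b | p.2 = t'} :=
        card_eq_sum_card_fiberwise fun _ _ => mem_univ _
    _ = ∑ _t' : Fin j, #(typeSlice t b) :=
        sum_congr rfl fun t' _ => (hπ b hb t' t).trans (card_typeSlice t b).symm
    _ = j * #(typeSlice t b) := by simp

theorem card_typeSlice_eq_div (hπ : IsBalanced π) (hb : b ∈ π.parts) (t : Fin j) :
    #(typeSlice t b) = #b / j := by
  rw [hπ.card_eq_mul hb t, Nat.mul_div_cancel_left _ t.pos]

theorem typeSlice_nonempty (hπ : IsBalanced π) (hb : b ∈ π.parts) (t : Fin j) :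
    (typeSlice t b).Nonempty := by
  have hpos : 0 < #b := card_pos.2 (π.nonempty_of_mem_parts hb)
  rw [hπ.card_eq_mul hb t] at hpos
  exact card_pos.1 (Nat.pos_of_mul_pos_left hpos)

theorem injOn_typeSlice (hπ : IsBalanced π) (z : Fin j) :
    Set.InjOn (typeSlice z) (π.parts : Set (Finset (Fin n × Fin j))) := by
  intro b hb b' hb' h
  obtain ⟨i, hi⟩ := hπ.typeSlice_nonempty hb z
  exact π.eq_of_mem_parts hb hb' (mem_typeSlice.1 hi) (mem_typeSlice.1 (h ▸ hi))

theorem parts_typeTrace (hπ : IsBalanced π) (z : Fin j) :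
    (typeTrace z π).parts = π.parts.image (typeSlice z) := by
  ext c
  simp only [Finpartition.parts_eq_image_part (typeTrace z π), mem_image, mem_univ, true_and,
    part_typeTrace]
  constructor
  · rintro ⟨i, rfl⟩
    exact ⟨π.part (i, z), π.part_mem.2 (mem_univ _), rfl⟩
  · rintro ⟨b, hb, rfl⟩
    obtain ⟨i, hi⟩ := hπ.typeSlice_nonempty hb z
    exact ⟨i, by rw [π.part_eq_of_mem hb (mem_typeSlice.1 hi)]⟩

theorem card_parts_typeTrace (hπ : IsBalanced π) (z : Fin j) :
    #(typeTrace z π).parts = #π.parts := by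
  rw [hπ.parts_typeTrace z, card_image_of_injOn (hπ.injOn_typeSlice z)]

theorem prod_parts_typeTrace {M : Type*} [CommMonoid M] (hπ : IsBalanced π) (z : Fin j)
    (w : ℕ → M) : ∏ c ∈ (typeTrace z π).parts, w #c = ∏ b ∈ π.parts, w (#b / j) := by
  rw [hπ.parts_typeTrace z, prod_image (hπ.injOn_typeSlice z)]
  exact prod_congr rfl fun b hb => by rw [hπ.card_typeSlice_eq_div hb]

theorem filter_sliceLabels_eq_typeSlice (hπ : IsBalanced π) (hb : b ∈ π.parts) (z t : Fin j) :
    ({i | sliceLabels z π t i = typeSlice z b} : Finset (Fin n)) = typeSlice t b := by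
  ext i
  rw [mem_filter, mem_typeSlice, sliceLabels,
    (hπ.injOn_typeSlice z).eq_iff (π.part_mem.2 (mem_univ _)) hb, π.part_eq_iff_mem hb]
  simp

theorem card_fiber_sliceLabels (hπ : IsBalanced π) (z t t' : Fin j) (c : Finset (Fin n)) :
    #{i | sliceLabels z π t i = c} = #{i | sliceLabels z π t' i = c} := by
  by_cases hc : ∃ b ∈ π.parts, typeSlice z b = c
  · obtain ⟨b, hb, rfl⟩ := hc
    simp only [hπ.filter_sliceLabels_eq_typeSlice hb]
    exact isBalanced_iff_card_typeSlice.1 hπ b hb t t'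
  · have hempty (t : Fin j) : ({i | sliceLabels z π t i = c} : Finset (Fin n)) = ∅ :=
      filter_false_of_mem fun i _ h => hc ⟨_, π.part_mem.2 (mem_univ _), h⟩
    rw [hempty, hempty]

theorem sliceLabels_mem_admissibleLabels (hπ : IsBalanced π) (z : Fin j) :
    sliceLabels z π ∈ admissibleLabels z (typeTrace z π) := by
  have hz : sliceLabels z π z = (typeTrace z π).part :=
    funext fun i => (part_typeTrace z π i).symm
  refine mem_admissibleLabels.2 ⟨hz, fun t => mem_filter.2 ⟨mem_univ _, fun c => ?_⟩⟩
  rw [← hz]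
  exact hπ.card_fiber_sliceLabels z t z c

theorem ofLabels_sliceLabels (hπ : IsBalanced π) (z : Fin j) : ofLabels (sliceLabels z π) = π :=
  Finpartition.ker_comp_part π (hπ.injOn_typeSlice z)

end IsBalanced

theorem card_isBalanced_typeTrace_eq (z : Fin j) (ρ : Finpartition (univ : Finset (Fin n))) :
    #{π ∈ {π | IsBalanced π} | typeTrace z π = ρ} = #(rearrangements ρ.part) ^ (j - 1) := by
  have hcard := card_admissibleLabels z ρ
  rw [Fintype.card_fin] at hcard
  rw [← hcard]
  refine card_nbij' (sliceLabels z) ofLabels (fun π hπ => ?_) (fun f hf => ?_) (fun π hπ => ?_)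
    (fun f hf => ?_)
  · obtain ⟨hbal, rfl⟩ := mem_filter.1 hπ
    exact (mem_filter.1 hbal).2.sliceLabels_mem_admissibleLabels z
  · obtain ⟨hz, hf⟩ := mem_admissibleLabels.1 hf
    exact mem_filter.2 ⟨mem_filter.2 ⟨mem_univ _, isBalanced_ofLabels hf⟩, typeTrace_ofLabels hz⟩
  · exact (mem_filter.1 (mem_filter.1 hπ).1).2.ofLabels_sliceLabels z
  · obtain ⟨hz, hf⟩ := mem_admissibleLabels.1 hf
    exact sliceLabels_ofLabels hz hf

theorem sum_isBalanced_typeTrace_eq (z : Fin j) (ρ : Finpartition (univ : Finset (Fin n)))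
    (u y : ℝ) :
    ∑ π ∈ {π ∈ {π | IsBalanced π} | typeTrace z π = ρ},
        risingFactorial u #π.parts *
          ∏ b ∈ π.parts, -risingFactorial (-y) (#b / j) * ((#b / j)! : ℝ) ^ (j - 1) =
      (n ! : ℝ) ^ (j - 1) * ρ.ewensWeight u y := by
  have hweight : ∀ π ∈ ({π ∈ {π | IsBalanced π} | typeTrace z π = ρ} : Finset _),
      risingFactorial u #π.parts *
          ∏ b ∈ π.parts, -risingFactorial (-y) (#b / j) * ((#b / j)! : ℝ) ^ (j - 1) =
        risingFactorial u #ρ.parts *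
          ∏ c ∈ ρ.parts, -risingFactorial (-y) #c * ((#c)! : ℝ) ^ (j - 1) := by
    intro π hπ
    obtain ⟨hbal, rfl⟩ := mem_filter.1 hπ
    rw [(mem_filter.1 hbal).2.card_parts_typeTrace z, (mem_filter.1 hbal).2.prod_parts_typeTrace z
      fun m => -risingFactorial (-y) m * ((m)! : ℝ) ^ (j - 1)]
  have hfactorial := card_rearrangements_mul_prod_factorial ρ.part
  rw [Fintype.card_fin, ρ.prod_factorial_card_fiber_part] at hfactorial
  rw [sum_congr rfl hweight, sum_const, card_isBalanced_typeTrace_eq, nsmul_eq_mul, ← hfactorial,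
    Finpartition.ewensWeight]
  push_cast
  rw [prod_mul_distrib, prod_pow]
  ring

end Balanced

theorem balanced_crp_normalization_general (n j : ℕ) (hj : 1 ≤ j)
    (α : ℝ) (hα : α ≠ 0) (θ : ℝ) :
    ∑ π ∈ (Finset.univ : Finset (Finpartition (Finset.univ : Finset (Fin n × Fin j)))).filter
        (fun π => IsBalanced π),
      risingFactorial (θ / α) π.parts.card *
        ∏ b ∈ π.parts,
          (-(risingFactorial (-(α / j)) (b.card / j))) *
            (Nat.factorial (b.card / j) : ℝ) ^ (j - 1) =
    risingFactorial (θ / j) n * (Nat.factorial n : ℝ) ^ (j - 1) := by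
  have hθ : θ / α * (α / j) = θ / j := by
    field_simp
  rw [← sum_fiberwise_of_maps_to (g := typeTrace (⟨0, hj⟩ : Fin j)) fun _ _ => mem_univ _]
  simp_rw [sum_isBalanced_typeTrace_eq, ← mul_sum, Finpartition.sum_ewensWeight, hθ,
    Finset.card_univ, Fintype.card_fin]
  ring

/-- Normalization of the balanced Chinese restaurant process distribution: the weights
`(θ/α)^{↑#π} ∏_{b∈π} [−(−α/j)^{↑(#b/j)}]((#b/j)!)^{j−1}` on `j`-balanced set partitions
of `{1,…,n} × {1,…,j}` sum to `(θ/j)^{↑n}(n!)^{j−1}`. -/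
theorem balanced_crp_normalization (n j : ℕ) (hn : 1 ≤ n) (hj : 1 ≤ j)
    (α : ℝ) (hα : α ≠ 0) (θ : ℝ) :
    ∑ π ∈ (Finset.univ : Finset (Finpartition (Finset.univ : Finset (Fin n × Fin j)))).filter
        (fun π => IsBalanced π),
      risingFactorial (θ / α) π.parts.card *
        ∏ b ∈ π.parts,
          (-(risingFactorial (-(α / j)) (b.card / j))) *
            (Nat.factorial (b.card / j) : ℝ) ^ (j - 1) =
    risingFactorial (θ / j) n * (Nat.factorial n : ℝ) ^ (j - 1) :=
  balanced_crp_normalization_general n j hj α hα θ
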